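/- arXiv:1408.1170 — 2 statements merged into one kernel-verified Lean document; each statement's English description precedes it below -/
import Mathlib

section
/- Let X be a compact Hausdorff topological space and let B be a closed unital star-subalgebra of the C*-algebra C(X, ℂ) of continuous complex-valued functions on X. Then the map ρ : X → characterSpace(ℂ, B) sending a point x ∈ X to the character b ↦ b(x) (evaluation at x restricted to B) is continuous and surjective; consequently, since X is compact and the character space is Hausdorff, ρ is a quotient map. -/
/-! A character `φ` of `B` is evaluation at a point of the common zero set of the functions
`b - φ b`, `b ∈ B`. These zero sets are closed, so by compactness it suffices that finitely many
of them, for `b₁, …, bₙ`, meet. Otherwise `∑ |bᵢ - φ bᵢ|²` vanishes nowhere, hence is invertible in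
`C(X, ℂ)`, hence in `B` by spectral permanence for the closed star-subalgebra `B`; but `φ` kills it. -/

open WeakDual WeakDual.CharacterSpace

namespace ContinuousMap

variable {X ι : Type*} [TopologicalSpace X]

theorem sum_star_mul_self_apply (s : Finset ι) (f : ι → C(X, ℂ)) (x : X) :
    (∑ i ∈ s, star (f i) * f i) x = ∑ i ∈ s, (Complex.normSq (f i x) : ℂ) := by
  simp only [sum_apply, mul_apply, star_apply, Complex.normSq_eq_conj_mul_self]
  rfl

theorem isUnit_sum_star_mul_self {s : Finset ι} {f : ι → C(X, ℂ)}
    (h : ∀ x, ∃ i ∈ s, f i x ≠ 0) : IsUnit (∑ i ∈ s, star (f i) * f i) := by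
  rw [isUnit_iff_forall_ne_zero]
  intro x
  obtain ⟨j, hj, hfj⟩ := h x
  rw [sum_star_mul_self_apply, ← Complex.ofReal_sum, Complex.ofReal_ne_zero]
  exact (Finset.sum_pos' (fun i _ => Complex.normSq_nonneg (f i x))
    ⟨j, hj, Complex.normSq_pos.mpr hfj⟩).ne'

end ContinuousMap

namespace WeakDual.CharacterSpace

variable {X : Type*} [TopologicalSpace X] [CompactSpace X] {B : StarSubalgebra ℂ C(X, ℂ)}

theorem exists_forall_mem_apply_eq (hB : IsClosed (B : Set C(X, ℂ))) (φ : characterSpace ℂ B)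
    (s : Finset B) : ∃ x, ∀ b ∈ s, (b : C(X, ℂ)) x = φ b := by
  by_contra! h
  let f : B → B := fun b => b - algebraMap ℂ B (φ b)
  have hφf : ∀ b, φ (f b) = 0 := fun b => by simp [f, AlgHomClass.commutes]
  have hunit : IsUnit (∑ b ∈ s, star (f b) * f b) := by
    rw [← B.coe_isUnit (hS := hB)]
    push_cast
    refine ContinuousMap.isUnit_sum_star_mul_self fun x => ?_
    obtain ⟨b, hb, hbx⟩ := h x
    exact ⟨b, hb, by simpa [f, sub_eq_zero] using hbx⟩
  exact (hunit.map φ).ne_zero (by simp [map_sum, hφf])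

theorem exists_forall_apply_eq (hB : IsClosed (B : Set C(X, ℂ))) (φ : characterSpace ℂ B) :
    ∃ x, ∀ b : B, (b : C(X, ℂ)) x = φ b := by
  have hclosed (b : B) : IsClosed {x | (b : C(X, ℂ)) x = φ b} :=
    isClosed_eq (map_continuous _) continuous_const
  obtain ⟨x, hx⟩ := CompactSpace.iInter_nonempty hclosed fun s => by
    obtain ⟨x, hx⟩ := exists_forall_mem_apply_eq hB φ s
    exact ⟨x, Set.mem_iInter₂.mpr hx⟩
  exact ⟨x, Set.mem_iInter.mp hx⟩

end WeakDual.CharacterSpace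

theorem statement4_general {X : Type*} [TopologicalSpace X] [CompactSpace X]
    (B : StarSubalgebra ℂ C(X, ℂ)) (hB : IsClosed (B : Set C(X, ℂ))) :
    ∃ ρ : X → characterSpace ℂ B,
      (∀ (x : X) (b : B), ρ x b = (b : C(X, ℂ)) x) ∧
      Continuous ρ ∧ Function.Surjective ρ ∧ Topology.IsQuotientMap ρ := by
  have : CompleteSpace B := hB.completeSpace_coe
  let ρ : C(X, characterSpace ℂ B) := (compContinuousMap B.subtype).comp (continuousMapEval X ℂ)
  have hρ (x : X) (b : B) : ρ x b = (b : C(X, ℂ)) x := rfl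
  have hsurj : Function.Surjective ρ := fun φ => by
    obtain ⟨x, hx⟩ := exists_forall_apply_eq hB φ
    exact ⟨x, ext fun b => (hρ x b).trans (hx b)⟩
  exact ⟨ρ, hρ, ρ.continuous, hsurj, ρ.continuous.isClosedMap.isQuotientMap ρ.continuous hsurj⟩

/-- For a compact Hausdorff space `X` and a closed unital star-subalgebra `B` of
`C(X, ℂ)`, the map `ρ : X → characterSpace ℂ B` sending `x` to evaluation at `x` (restricted
to `B`) is continuous and surjective, hence a quotient map. -/
theorem statement4 {X : Type*} [TopologicalSpace X] [CompactSpace X] [T2Space X]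
    (B : StarSubalgebra ℂ C(X, ℂ)) (hB : IsClosed (B : Set C(X, ℂ))) :
    ∃ ρ : X → characterSpace ℂ B,
      (∀ (x : X) (b : B), ρ x b = (b : C(X, ℂ)) x) ∧
      Continuous ρ ∧ Function.Surjective ρ ∧ Topology.IsQuotientMap ρ :=
  statement4_general B hB
end

section
/- Let A be a commutative unital C*-algebra over ℂ that is finite-dimensional as a complex vector space. Then the set of minimal projections of A is finite and nonempty when A ≠ 0, any two distinct minimal projections p ≠ q of A are orthogonal (p·q = 0), and the sum of all minimal projections of A equals the unit 1 of A. -/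
set_option linter.unusedSectionVars false

def IsProjection {A : Type*} [Mul A] [Star A] (p : A) : Prop :=
  p * p = p ∧ star p = p

def IsMinimalProjection {A : Type*} [Mul A] [Star A] [Zero A] (p : A) : Prop :=
  IsProjection p ∧ p ≠ 0 ∧ ∀ q : A, IsProjection q → q * p = q → q = 0 ∨ q = p

section Aux

variable {A : Type*} [NormedCommRing A] [NormedAlgebra ℂ A] [StarRing A]
  [CStarRing A] [StarModule ℂ A] [CompleteSpace A] [FiniteDimensional ℂ A]

lemma aux_orth (p q : A) (hp : IsMinimalProjection p) (hq : IsMinimalProjection q)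
    (hne : p ≠ q) : p * q = 0 := by
  have hpq_proj : IsProjection (p * q) := by
    constructor
    · calc p * q * (p * q) = (p * p) * (q * q) := by ring
      _ = p * q := by rw [hp.1.1, hq.1.1]
    · rw [star_mul, hp.1.2, hq.1.2, mul_comm]
  have h1 := hp.2.2 (p * q) hpq_proj (by rw [mul_comm, ← mul_assoc, hp.1.1])
  have h2 := hq.2.2 (p * q) hpq_proj (by rw [mul_assoc, hq.1.1])
  rcases h1 with h | h
  · exact h
  · rcases h2 with h' | h'
    · exact h'
    · exact absurd (h ▸ h') hne

/-- Every nonzero projection dominates a minimal projection. -/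
lemma aux_descent (f : A) (hf : IsProjection f) (hf0 : f ≠ 0) :
    ∃ p : A, IsMinimalProjection p ∧ p * f = p := by
  set T : Set A := {q | IsProjection q ∧ q ≠ 0 ∧ q * f = q} with hT
  have hfT : f ∈ T := ⟨hf, hf0, hf.1⟩
  set d : A → ℕ := fun q => Module.finrank ℂ (LinearMap.range (LinearMap.mulLeft ℂ q)) with hd
  have hD : (d '' T).Nonempty := ⟨d f, f, hfT, rfl⟩
  obtain ⟨q, hqT, hq⟩ := Nat.sInf_mem hD
  have hmin : ∀ r ∈ T, d q ≤ d r := fun r hr => hq ▸ Nat.sInf_le ⟨r, hr, rfl⟩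
  refine ⟨q, ⟨hqT.1, hqT.2.1, ?_⟩, hqT.2.2⟩
  intro r hr hrq
  by_cases hr0 : r = 0
  · exact Or.inl hr0
  · right
    have hrT : r ∈ T := ⟨hr, hr0, by rw [← hrq, mul_assoc, hqT.2.2]⟩
    have hle : LinearMap.range (LinearMap.mulLeft ℂ r) ≤
        LinearMap.range (LinearMap.mulLeft ℂ q) := by
      rintro y ⟨x, rfl⟩
      exact ⟨r * x, by simp [LinearMap.mulLeft_apply]; rw [← mul_assoc, mul_comm q r, hrq]⟩
    have heq : LinearMap.range (LinearMap.mulLeft ℂ r) =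
        LinearMap.range (LinearMap.mulLeft ℂ q) :=
      Submodule.eq_of_le_of_finrank_le hle (hmin r hrT)
    have hqmem : q ∈ LinearMap.range (LinearMap.mulLeft ℂ r) := by
      rw [heq]; exact ⟨q, by simp [LinearMap.mulLeft_apply, hqT.1.1]⟩
    obtain ⟨a, ha⟩ := hqmem
    simp only [LinearMap.mulLeft_apply] at ha
    calc r = r * q := hrq.symm
    _ = r * (r * a) := by rw [ha]
    _ = (r * r) * a := by ring
    _ = r * a := by rw [hr.1]
    _ = q := ha

lemma aux_finite : {p : A | IsMinimalProjection p}.Finite := by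
  set S : Set A := {p | IsMinimalProjection p}
  have hli : LinearIndependent ℂ (fun p : S => (p : A)) := by
    rw [linearIndependent_iff']
    intro s g hsum j hj
    have h0 : (∑ i ∈ s, g i • (i : A)) * (j : A) = 0 := by rw [hsum, zero_mul]
    rw [Finset.sum_mul] at h0
    have hdiag : ∀ i ∈ s, i ≠ j → g i • (i : A) * (j : A) = 0 := by
      intro i _ hij
      rw [smul_mul_assoc, aux_orth (i : A) (j : A) i.2 j.2 (fun h => hij (Subtype.ext h)),
        smul_zero]
    rw [Finset.sum_eq_single_of_mem j hj hdiag, smul_mul_assoc, j.2.1.1] at h0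
    exact (smul_eq_zero.mp h0).resolve_right j.2.2.1
  exact hli.setFinite

end Aux

/-- In a finite-dimensional commutative unital C*-algebra `A` over `ℂ`, the set of
minimal projections is finite, nonempty when `A ≠ 0`, any two distinct minimal projections are
orthogonal, and the sum of all minimal projections is `1`. -/
theorem statement9 {A : Type*} [NormedCommRing A] [NormedAlgebra ℂ A] [StarRing A]
    [CStarRing A] [StarModule ℂ A] [CompleteSpace A] [FiniteDimensional ℂ A] :
    {p : A | IsMinimalProjection p}.Finite ∧
      (Nontrivial A → {p : A | IsMinimalProjection p}.Nonempty) ∧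
      (∀ p q : A, IsMinimalProjection p → IsMinimalProjection q → p ≠ q → p * q = 0) ∧
      ∑ᶠ (p : A) (_ : IsMinimalProjection p), p = 1 := by
  have hfin : {p : A | IsMinimalProjection p}.Finite := aux_finite
  set s : Finset A := hfin.toFinset with hs
  have hmem : ∀ p, p ∈ s ↔ IsMinimalProjection p := fun p => hfin.mem_toFinset
  set e : A := ∑ p ∈ s, p with he
  have hsum_eq : ∑ᶠ (p : A) (_ : IsMinimalProjection p), p = e := by
    rw [he, ← finsum_mem_coe_finset]
    congr 1
    ext p
    simp [hmem]
  have hpe : ∀ p ∈ s, p * e = p := by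
    intro p hp
    rw [he, Finset.mul_sum, Finset.sum_eq_single_of_mem p hp
      (fun q hq hqp => aux_orth p q ((hmem p).mp hp) ((hmem q).mp hq) (Ne.symm hqp)),
      ((hmem p).mp hp).1.1]
  have hee : e * e = e := by
    rw [he, Finset.sum_mul]
    exact Finset.sum_congr rfl (fun p hp => by rw [← he, hpe p hp])
  have hstare : star e = e := by
    rw [he, star_sum]
    exact Finset.sum_congr rfl (fun p hp => ((hmem p).mp hp).1.2)
  have he1 : e = 1 := by
    by_contra hne
    have hf0 : (1 : A) - e ≠ 0 := fun h => hne (by linear_combination -h)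
    have hfproj : IsProjection ((1 : A) - e) := by
      constructor
      · linear_combination hee
      · rw [star_sub, star_one, hstare]
    obtain ⟨p, hp, hpf⟩ := aux_descent (1 - e) hfproj hf0
    have hp0 : p * (1 - e) = 0 := by
      have := hpe p ((hmem p).mpr hp)
      linear_combination -this
    exact hp.2.1 (by rw [← hpf, hp0])
  refine ⟨hfin, ?_, fun p q hp hq => aux_orth p q hp hq, by rw [hsum_eq, he1]⟩
  intro hnt
  by_contra hemp
  rw [Set.not_nonempty_iff_eq_empty] at hemp
  have : s = ∅ := by rw [hs, Set.Finite.toFinset_eq_empty, hemp]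
  rw [this, Finset.sum_empty] at he
  exact one_ne_zero (he1 ▸ he.symm ▸ rfl : (1 : A) = 0)
end
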